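/- Define c₁ = sup_{x ∈ ℝ} (1 + 4x⁴ + 8x⁶ - x⁸). Then c₁ is finite and positive, and for all x, y ∈ ℝ and t ≥ 0: 6x⁵(-x³ - y) + (15/4)x⁴e^{-t} ≤ c₁ - 2(1 + 1.5x⁶ + 2.5x⁸) + (1 + 1.5y⁶ + 2.5y⁸). -/

import Mathlib

/-!
Young's inequality `6x⁵y ≤ 5x⁶ + y⁶` absorbs the cross term, and `e^{-t} ≤ 1`. What is left
of the `x`-terms is at most `1 + (15/4)x⁴ + 8x⁶ - x⁸ ≤ p₁ x ≤ c₁`, and of the `y`-terms only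
`y⁶/2 + 5y⁸/2 ≥ 0` remains.
-/

open Real

def p₁ (x : ℝ) : ℝ := 1 + 4 * x ^ 4 + 8 * x ^ 6 - x ^ 8

noncomputable def c₁ : ℝ := sSup (Set.range p₁)

lemma p₁_le (x : ℝ) : p₁ x ≤ 10000 := by
  unfold p₁
  nlinarith [sq_nonneg (x ^ 4 - 4 * x ^ 2 - 10), sq_nonneg (x ^ 2 - 40), sq_nonneg x]

lemma bddAbove_range_p₁ : BddAbove (Set.range p₁) :=
  ⟨10000, Set.forall_mem_range.2 p₁_le⟩

lemma p₁_le_c₁ (x : ℝ) : p₁ x ≤ c₁ :=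
  le_csSup bddAbove_range_p₁ ⟨x, rfl⟩

lemma one_le_c₁ : 1 ≤ c₁ := by
  simpa [p₁] using p₁_le_c₁ 0

lemma six_mul_pow_five_mul_le (x y : ℝ) : 6 * x ^ 5 * y ≤ 5 * x ^ 6 + y ^ 6 := by
  nlinarith [sq_nonneg (x - y), sq_nonneg (x + y), sq_nonneg (x ^ 2 - y ^ 2), sq_nonneg (x * y),
    sq_nonneg (x ^ 3 - y ^ 3), sq_nonneg (x ^ 2 - x * y), sq_nonneg (x * y - y ^ 2)]

/-- With `c₁ = sup_{x ∈ ℝ} (1 + 4x⁴ + 8x⁶ - x⁸)` (finite, i.e. the range is bounded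
above, and positive), for all `x, y ∈ ℝ` and `t ≥ 0`:
`6x⁵(-x³ - y) + (15/4)x⁴e^{-t} ≤ c₁ - 2(1 + 1.5x⁶ + 2.5x⁸) + (1 + 1.5y⁶ + 2.5y⁸)`. -/
theorem lyapunov_sup_bound :
    BddAbove (Set.range fun x : ℝ => 1 + 4 * x ^ 4 + 8 * x ^ 6 - x ^ 8) ∧
    0 < sSup (Set.range fun x : ℝ => 1 + 4 * x ^ 4 + 8 * x ^ 6 - x ^ 8) ∧
    ∀ x y t : ℝ, 0 ≤ t →
      6 * x ^ 5 * (-x ^ 3 - y) + (15 / 4) * x ^ 4 * Real.exp (-t)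
        ≤ sSup (Set.range fun x : ℝ => 1 + 4 * x ^ 4 + 8 * x ^ 6 - x ^ 8)
          - 2 * (1 + 1.5 * x ^ 6 + 2.5 * x ^ 8) + (1 + 1.5 * y ^ 6 + 2.5 * y ^ 8) := by
  refine ⟨bddAbove_range_p₁, one_pos.trans_le one_le_c₁, fun x y t ht => ?_⟩
  have hexp : (15 / 4) * x ^ 4 * exp (-t) ≤ (15 / 4) * x ^ 4 :=
    mul_le_of_le_one_right (by positivity) (exp_le_one_iff.2 (neg_nonpos.2 ht))
  have hyoung := six_mul_pow_five_mul_le x (-y)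
  rw [Even.neg_pow (by decide)] at hyoung
  have hc₁ := p₁_le_c₁ x
  unfold p₁ at hc₁
  change _ ≤ c₁ - _ + _
  linarith [pow_two_nonneg (x ^ 2), pow_two_nonneg (y ^ 3), pow_two_nonneg (y ^ 4)]
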